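/- Let Ω ⊆ ℂ be a connected, simply connected open set containing a nonempty open real interval I ⊆ ℝ, and fix s₀ ∈ I. Let c = (c₁,c₂,c₃) and e = (e₁,e₂,e₃) : Ω → ℂ³ be holomorphic componentwise, with c(s) ∈ ℝ³ and e(s) ∈ ℝ³ for all s ∈ I, and suppose that for all s ∈ I: c₁'(s)² + c₂'(s)² = e₁(s)² + e₂(s)² and c₁'(s)e₁(s) + c₂'(s)e₂(s) = 0. Define x : Ω → ℝ³ by x(z) = Re[c(z) − i∫_{s₀}^{z} e(w) dw] (the integral along any path in Ω). Then: (i) x(s) = c(s) for all s ∈ I; (ii) ∂x/∂v(s) = e(s) for all s ∈ I (z = u + iv); and (iii) the holomorphic curve φ = c' − i e satisfies φ₁² + φ₂² = 0 on all of Ω, so that x has vanishing isotropic mean curvature at every point of Ω where the third component of x_u × x_v is nonzero. This is the Björling representation: x is the simply isotropic minimal surface containing the curve c with prescribed tangent field e along c. -/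

import Mathlib

/-!
Write `x = Re Φ` with `Φ = c − i E`, so that `Φ' = φ = c' − i e`. On the real interval the
primitive `E` of the real function `e` is real (it vanishes at `s₀`), and `c'` is real; this gives
`x = c` and `x_v = Re(i φ) = e` there. The holomorphic function `φ₁² + φ₂²` vanishes on `I` by the
Björling conditions, hence on the connected set `Ω` by the identity theorem. Since `x_u = Re φ` and
`x_v = Re(i φ)`, this isotropy makes `x` isothermal for the isotropic metric (`g₁₁ = g₂₂`,
`g₁₂ = 0`), and `x` is harmonic as the real part of a holomorphic map, so `h₁₁ + h₂₂ = 0`. The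
numerator of `H` is then `g₁₁ (h₁₁ + h₂₂) = 0`.
-/

noncomputable section

/-- Partial derivative of a map on ℂ ≅ ℝ² in the u-direction (real direction 1). -/
def du {E : Type*} [NormedAddCommGroup E] [NormedSpace ℝ E]
    (f : ℂ → E) : ℂ → E := fun z => fderiv ℝ f z 1

/-- Partial derivative of a map on ℂ ≅ ℝ² in the v-direction (direction i). -/
def dv {E : Type*} [NormedAddCommGroup E] [NormedSpace ℝ E]
    (f : ℂ → E) : ℂ → E := fun z => fderiv ℝ f z Complex.I

/-- The degenerate simply isotropic inner product on ℝ³: ⟨u,v⟩ = u₁v₁ + u₂v₂. -/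
def isoInner (a b : ℝ × ℝ × ℝ) : ℝ := a.1 * b.1 + a.2.1 * b.2.1

/-- The Euclidean dot product on ℝ³. -/
def dot3 (a b : ℝ × ℝ × ℝ) : ℝ := a.1 * b.1 + a.2.1 * b.2.1 + a.2.2 * b.2.2

/-- The Euclidean cross product on ℝ³. -/
def cross3 (a b : ℝ × ℝ × ℝ) : ℝ × ℝ × ℝ :=
  (a.2.1 * b.2.2 - a.2.2 * b.2.1, a.2.2 * b.1 - a.1 * b.2.2, a.1 * b.2.1 - a.2.1 * b.1)

/-- First fundamental form coefficients (isotropic metric) of x : ℂ → ℝ³. -/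
def g11 (x : ℂ → ℝ × ℝ × ℝ) (z : ℂ) : ℝ := isoInner (du x z) (du x z)
def g12 (x : ℂ → ℝ × ℝ × ℝ) (z : ℂ) : ℝ := isoInner (du x z) (dv x z)
def g22 (x : ℂ → ℝ × ℝ × ℝ) (z : ℂ) : ℝ := isoInner (dv x z) (dv x z)

/-- The minimal normal: the unique vector of the form (n₁,n₂,1) Euclidean-orthogonal to
x_u and x_v (obtained by normalizing the cross product so its third component is 1). -/
def Nm (x : ℂ → ℝ × ℝ × ℝ) (z : ℂ) : ℝ × ℝ × ℝ :=
  ((cross3 (du x z) (dv x z)).1 / (cross3 (du x z) (dv x z)).2.2,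
   (cross3 (du x z) (dv x z)).2.1 / (cross3 (du x z) (dv x z)).2.2, 1)

/-- Second fundamental form coefficients with respect to the minimal normal. -/
def h11 (x : ℂ → ℝ × ℝ × ℝ) (z : ℂ) : ℝ := dot3 (du (du x) z) (Nm x z)
def h12 (x : ℂ → ℝ × ℝ × ℝ) (z : ℂ) : ℝ := dot3 (du (dv x) z) (Nm x z)
def h22 (x : ℂ → ℝ × ℝ × ℝ) (z : ℂ) : ℝ := dot3 (dv (dv x) z) (Nm x z)

/-- The isotropic Gaussian curvature. -/
def Kcurv (x : ℂ → ℝ × ℝ × ℝ) (z : ℂ) : ℝ :=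
  (h11 x z * h22 x z - (h12 x z) ^ 2) / (g11 x z * g22 x z - (g12 x z) ^ 2)

/-- The isotropic mean curvature. -/
def meanH (x : ℂ → ℝ × ℝ × ℝ) (z : ℂ) : ℝ :=
  (g11 x z * h22 x z - 2 * g12 x z * h12 x z + g22 x z * h11 x z) /
    (2 * (g11 x z * g22 x z - (g12 x z) ^ 2))

/-- The Björling surface x(z) = Re[c(z) − i∫_{s₀}^z e(w)dw], expressed through
componentwise holomorphic primitives E of e vanishing at s₀ (which exist, and whose
path integrals are path-independent, because Ω is simply connected). -/
def bjorling (c₁ c₂ c₃ E₁ E₂ E₃ : ℂ → ℂ) : ℂ → ℝ × ℝ × ℝ := fun z =>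
  ((c₁ z - Complex.I * E₁ z).re, (c₂ z - Complex.I * E₂ z).re,
    (c₃ z - Complex.I * E₃ z).re)

open Complex Filter Topology Set

section RealAxis

theorem HasDerivAt.im_comp_ofReal {f : ℂ → ℂ} {p : ℂ} {t : ℝ} (h : HasDerivAt f p t) :
    HasDerivAt (fun y : ℝ => (f y).im) p.im t :=
  imCLM.hasFDerivAt.comp_hasDerivAt t h.comp_ofReal

theorem im_deriv_eq_zero_of_eventually_im_eq_zero {c : ℂ → ℂ} {s : ℝ}
    (hc : DifferentiableAt ℂ c s) (hr : ∀ᶠ t : ℝ in 𝓝 s, (c t).im = 0) :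
    (deriv c s).im = 0 :=
  hc.hasDerivAt.im_comp_ofReal.unique ((hasDerivAt_const s 0).congr_of_eventuallyEq hr)

theorem im_eq_of_hasDerivAt_of_im_eq_zero {T : Set ℝ} (hT : IsOpen T) (hTc : T.OrdConnected)
    {E e : ℂ → ℂ} (hE : ∀ t ∈ T, HasDerivAt E (e t) t) (he : ∀ t ∈ T, (e t).im = 0)
    {s t : ℝ} (hs : s ∈ T) (ht : t ∈ T) : (E s).im = (E t).im := by
  have hderiv : ∀ y ∈ T, HasDerivAt (fun y : ℝ => (E y).im) 0 y := fun y hy => by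
    simpa only [he y hy] using (hE y hy).im_comp_ofReal
  exact hT.is_const_of_deriv_eq_zero hTc.isPreconnected
    (fun y hy => (hderiv y hy).differentiableAt.differentiableWithinAt)
    (fun y hy => (hderiv y hy).deriv) hs ht

theorem AnalyticOnNhd.eqOn_zero_of_eventually_ofReal_eq_zero {f : ℂ → ℂ} {Ω : Set ℂ}
    (hf : AnalyticOnNhd ℂ f Ω) (hΩ : IsPreconnected Ω) {s₀ : ℝ} (hs₀ : (s₀ : ℂ) ∈ Ω)
    (hz : ∀ᶠ t : ℝ in 𝓝 s₀, f t = 0) : EqOn f 0 Ω := by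
  have hofReal : Tendsto ofReal (𝓝[≠] s₀) (𝓝[≠] (s₀ : ℂ)) :=
    continuous_ofReal.continuousWithinAt.tendsto_nhdsWithin fun _ _ ↦ by simp_all
  exact hf.eqOn_zero_of_preconnected_of_frequently_eq_zero hΩ hs₀
    (hofReal.frequently (hz.filter_mono nhdsWithin_le_nhds).frequently)

end RealAxis

theorem Filter.EventuallyEq.du_eq {E : Type*} [NormedAddCommGroup E] [NormedSpace ℝ E]
    {f g : ℂ → E} {z : ℂ} (h : f =ᶠ[𝓝 z] g) : du f z = du g z := by
  simp only [du, h.fderiv_eq]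

theorem Filter.EventuallyEq.dv_eq {E : Type*} [NormedAddCommGroup E] [NormedSpace ℝ E]
    {f g : ℂ → E} {z : ℂ} (h : f =ᶠ[𝓝 z] g) : dv f z = dv g z := by
  simp only [dv, h.fderiv_eq]

def reMap (F₁ F₂ F₃ : ℂ → ℂ) (z : ℂ) : ℝ × ℝ × ℝ := ((F₁ z).re, (F₂ z).re, (F₃ z).re)

section reMap

variable {F₁ F₂ F₃ : ℂ → ℂ} {z : ℂ}

theorem fderiv_reMap_apply {p₁ p₂ p₃ : ℂ} (h₁ : HasDerivAt F₁ p₁ z) (h₂ : HasDerivAt F₂ p₂ z)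
    (h₃ : HasDerivAt F₃ p₃ z) (w : ℂ) :
    fderiv ℝ (reMap F₁ F₂ F₃) z w = ((p₁ * w).re, (p₂ * w).re, (p₃ * w).re) := by
  have hre : ∀ {f : ℂ → ℂ} {p : ℂ}, HasDerivAt f p z →
      HasFDerivAt (fun w => (f w).re) (reCLM.comp (p • (1 : ℂ →L[ℝ] ℂ))) z :=
    fun h => reCLM.hasFDerivAt.comp z h.complexToReal_fderiv
  have hF : HasFDerivAt (reMap F₁ F₂ F₃) _ z := (hre h₁).prodMk ((hre h₂).prodMk (hre h₃))
  rw [hF.fderiv]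
  simp

theorem du_reMap (h₁ : DifferentiableAt ℂ F₁ z) (h₂ : DifferentiableAt ℂ F₂ z)
    (h₃ : DifferentiableAt ℂ F₃ z) :
    du (reMap F₁ F₂ F₃) z = reMap (deriv F₁) (deriv F₂) (deriv F₃) z := by
  simpa [du, reMap] using fderiv_reMap_apply h₁.hasDerivAt h₂.hasDerivAt h₃.hasDerivAt 1

theorem dv_reMap (h₁ : DifferentiableAt ℂ F₁ z) (h₂ : DifferentiableAt ℂ F₂ z)
    (h₃ : DifferentiableAt ℂ F₃ z) :
    dv (reMap F₁ F₂ F₃) z =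
      reMap (fun w => I * deriv F₁ w) (fun w => I * deriv F₂ w) (fun w => I * deriv F₃ w) z := by
  simpa [dv, reMap, mul_comm] using fderiv_reMap_apply h₁.hasDerivAt h₂.hasDerivAt h₃.hasDerivAt I

theorem g12_reMap_eq_zero (h₁ : DifferentiableAt ℂ F₁ z) (h₂ : DifferentiableAt ℂ F₂ z)
    (h₃ : DifferentiableAt ℂ F₃ z) (hiso : deriv F₁ z ^ 2 + deriv F₂ z ^ 2 = 0) :
    g12 (reMap F₁ F₂ F₃) z = 0 := by
  have him := congrArg im hiso
  simp only [g12, isoInner, du_reMap h₁ h₂ h₃, dv_reMap h₁ h₂ h₃, reMap]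
  simp only [add_im, sq, mul_im, zero_im, mul_re, I_re, I_im] at him ⊢
  linarith

theorem g11_reMap_eq_g22 (h₁ : DifferentiableAt ℂ F₁ z) (h₂ : DifferentiableAt ℂ F₂ z)
    (h₃ : DifferentiableAt ℂ F₃ z) (hiso : deriv F₁ z ^ 2 + deriv F₂ z ^ 2 = 0) :
    g11 (reMap F₁ F₂ F₃) z = g22 (reMap F₁ F₂ F₃) z := by
  have hre := congrArg re hiso
  simp only [g11, g22, isoInner, du_reMap h₁ h₂ h₃, dv_reMap h₁ h₂ h₃, reMap]
  simp only [add_re, sq, mul_re, zero_re, I_re, I_im] at hre ⊢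
  linarith

theorem du_du_add_dv_dv_reMap (h₁ : AnalyticAt ℂ F₁ z) (h₂ : AnalyticAt ℂ F₂ z)
    (h₃ : AnalyticAt ℂ F₃ z) :
    du (du (reMap F₁ F₂ F₃)) z + dv (dv (reMap F₁ F₂ F₃)) z = 0 := by
  have hev : ∀ᶠ w in 𝓝 z, AnalyticAt ℂ F₁ w ∧ AnalyticAt ℂ F₂ w ∧ AnalyticAt ℂ F₃ w :=
    h₁.eventually_analyticAt.and (h₂.eventually_analyticAt.and h₃.eventually_analyticAt)
  have hdu : du (reMap F₁ F₂ F₃) =ᶠ[𝓝 z] reMap (deriv F₁) (deriv F₂) (deriv F₃) :=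
    hev.mono fun w ⟨a₁, a₂, a₃⟩ =>
      du_reMap a₁.differentiableAt a₂.differentiableAt a₃.differentiableAt
  have hdv : dv (reMap F₁ F₂ F₃) =ᶠ[𝓝 z]
      reMap (fun w => I * deriv F₁ w) (fun w => I * deriv F₂ w) (fun w => I * deriv F₃ w) :=
    hev.mono fun w ⟨a₁, a₂, a₃⟩ =>
      dv_reMap a₁.differentiableAt a₂.differentiableAt a₃.differentiableAt
  have hd₁ := h₁.deriv.differentiableAt.hasDerivAt
  have hd₂ := h₂.deriv.differentiableAt.hasDerivAt
  have hd₃ := h₃.deriv.differentiableAt.hasDerivAt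
  rw [hdu.du_eq, hdv.dv_eq, du, dv, fderiv_reMap_apply hd₁ hd₂ hd₃,
    fderiv_reMap_apply (hd₁.const_mul I) (hd₂.const_mul I) (hd₃.const_mul I)]
  simp [Prod.ext_iff, mul_re]

end reMap

theorem meanH_eq_zero_of_isothermal_of_harmonic {x : ℂ → ℝ × ℝ × ℝ} {z : ℂ}
    (hg₁₂ : g12 x z = 0) (hg : g11 x z = g22 x z) (hΔ : du (du x) z + dv (dv x) z = 0) :
    meanH x z = 0 := by
  have hh : h11 x z + h22 x z = 0 := by
    simp only [h11, h22, dot3, eq_neg_of_add_eq_zero_right hΔ, Prod.fst_neg, Prod.snd_neg]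
    ring
  rw [meanH, hg₁₂, hg, div_eq_zero_iff]
  left
  linear_combination g22 x z * hh

theorem meanH_reMap_eq_zero {F₁ F₂ F₃ : ℂ → ℂ} {z : ℂ} (h₁ : AnalyticAt ℂ F₁ z)
    (h₂ : AnalyticAt ℂ F₂ z) (h₃ : AnalyticAt ℂ F₃ z)
    (hiso : deriv F₁ z ^ 2 + deriv F₂ z ^ 2 = 0) :
    meanH (reMap F₁ F₂ F₃) z = 0 :=
  meanH_eq_zero_of_isothermal_of_harmonic
    (g12_reMap_eq_zero h₁.differentiableAt h₂.differentiableAt h₃.differentiableAt hiso)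
    (g11_reMap_eq_g22 h₁.differentiableAt h₂.differentiableAt h₃.differentiableAt hiso)
    (du_du_add_dv_dv_reMap h₁ h₂ h₃)

section Bjorling

variable {Ω : Set ℂ} {c e E : ℂ → ℂ} {z : ℂ}

theorem hasDerivAt_sub_I_mul (hΩ : IsOpen Ω) (hc : DifferentiableOn ℂ c Ω)
    (hE : ∀ z ∈ Ω, HasDerivAt E (e z) z) :
    ∀ z ∈ Ω, HasDerivAt (fun w => c w - I * E w) (deriv c z - I * e z) z := fun z hz =>
  (hc.differentiableAt (hΩ.mem_nhds hz)).hasDerivAt.sub ((hE z hz).const_mul I)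

theorem analyticAt_sub_I_mul (hΩ : IsOpen Ω) (hc : DifferentiableOn ℂ c Ω)
    (hE : ∀ z ∈ Ω, HasDerivAt E (e z) z) (hz : z ∈ Ω) :
    AnalyticAt ℂ (fun w => c w - I * E w) z :=
  DifferentiableOn.analyticAt (fun _ hw =>
    (hasDerivAt_sub_I_mul hΩ hc hE _ hw).differentiableAt.differentiableWithinAt) (hΩ.mem_nhds hz)

theorem analyticOnNhd_deriv_sub_I_mul (hΩ : IsOpen Ω) (hc : DifferentiableOn ℂ c Ω)
    (he : DifferentiableOn ℂ e Ω) : AnalyticOnNhd ℂ (fun w => deriv c w - I * e w) Ω :=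
  ((hc.analyticOnNhd hΩ).deriv.differentiableOn.sub (he.const_mul I)).analyticOnNhd hΩ

theorem sq_add_sq_deriv_sub_I_mul_eq_zero {c₁ c₂ e₁ e₂ : ℂ → ℂ} (hΩ : IsOpen Ω)
    (hΩc : IsPreconnected Ω) {T : Set ℝ} (hT : IsOpen T) {s₀ : ℝ} (hs₀ : s₀ ∈ T)
    (hs₀Ω : (s₀ : ℂ) ∈ Ω) (hc₁ : DifferentiableOn ℂ c₁ Ω) (hc₂ : DifferentiableOn ℂ c₂ Ω)
    (he₁ : DifferentiableOn ℂ e₁ Ω) (he₂ : DifferentiableOn ℂ e₂ Ω)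
    (hBj₁ : ∀ s ∈ T, (deriv c₁ s) ^ 2 + (deriv c₂ s) ^ 2 = (e₁ s) ^ 2 + (e₂ s) ^ 2)
    (hBj₂ : ∀ s ∈ T, deriv c₁ s * e₁ s + deriv c₂ s * e₂ s = 0) :
    ∀ z ∈ Ω, (deriv c₁ z - I * e₁ z) ^ 2 + (deriv c₂ z - I * e₂ z) ^ 2 = 0 := by
  refine fun z hz => AnalyticOnNhd.eqOn_zero_of_eventually_ofReal_eq_zero
    (((analyticOnNhd_deriv_sub_I_mul hΩ hc₁ he₁).pow 2).add
      ((analyticOnNhd_deriv_sub_I_mul hΩ hc₂ he₂).pow 2)) hΩc hs₀Ω ?_ hz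
  filter_upwards [hT.mem_nhds hs₀] with s hs
  simp only [Pi.add_apply, Pi.pow_apply]
  linear_combination hBj₁ s hs - 2 * I * hBj₂ s hs + (e₁ s ^ 2 + e₂ s ^ 2) * I_sq

end Bjorling

theorem stmt19_general (Ω : Set ℂ) (hΩ : IsOpen Ω) (hΩconn : IsConnected Ω)
    (I : Set ℝ) (hI : IsOpen I) (hIint : I.OrdConnected)
    (hIΩ : ∀ s ∈ I, (s : ℂ) ∈ Ω) (s₀ : ℝ) (hs₀ : s₀ ∈ I)
    (c₁ c₂ c₃ e₁ e₂ e₃ : ℂ → ℂ)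
    (hc₁ : DifferentiableOn ℂ c₁ Ω) (hc₂ : DifferentiableOn ℂ c₂ Ω)
    (hc₃ : DifferentiableOn ℂ c₃ Ω)
    (he₁ : DifferentiableOn ℂ e₁ Ω) (he₂ : DifferentiableOn ℂ e₂ Ω)
    (hcreal : ∀ s ∈ I, (c₁ s).im = 0 ∧ (c₂ s).im = 0 ∧ (c₃ s).im = 0)
    (hereal : ∀ s ∈ I, (e₁ s).im = 0 ∧ (e₂ s).im = 0 ∧ (e₃ s).im = 0)
    (hBj₁ : ∀ s ∈ I, (deriv c₁ s) ^ 2 + (deriv c₂ s) ^ 2 = (e₁ s) ^ 2 + (e₂ s) ^ 2)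
    (hBj₂ : ∀ s ∈ I, deriv c₁ s * e₁ s + deriv c₂ s * e₂ s = 0)
    (E₁ E₂ E₃ : ℂ → ℂ)
    (hE₁ : ∀ z ∈ Ω, HasDerivAt E₁ (e₁ z) z)
    (hE₂ : ∀ z ∈ Ω, HasDerivAt E₂ (e₂ z) z)
    (hE₃ : ∀ z ∈ Ω, HasDerivAt E₃ (e₃ z) z)
    (hE₀ : E₁ s₀ = 0 ∧ E₂ s₀ = 0 ∧ E₃ s₀ = 0) :
    (∀ s ∈ I, bjorling c₁ c₂ c₃ E₁ E₂ E₃ s = ((c₁ s).re, (c₂ s).re, (c₃ s).re)) ∧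
    (∀ s ∈ I, dv (bjorling c₁ c₂ c₃ E₁ E₂ E₃) s = ((e₁ s).re, (e₂ s).re, (e₃ s).re)) ∧
    (∀ z ∈ Ω, (deriv c₁ z - Complex.I * e₁ z) ^ 2 +
        (deriv c₂ z - Complex.I * e₂ z) ^ 2 = 0) ∧
    (∀ z ∈ Ω,
      (cross3 (du (bjorling c₁ c₂ c₃ E₁ E₂ E₃) z)
          (dv (bjorling c₁ c₂ c₃ E₁ E₂ E₃) z)).2.2 ≠ 0 →
        meanH (bjorling c₁ c₂ c₃ E₁ E₂ E₃) z = 0) := by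
  have hx : bjorling c₁ c₂ c₃ E₁ E₂ E₃ = reMap (fun w => c₁ w - Complex.I * E₁ w)
      (fun w => c₂ w - Complex.I * E₂ w) (fun w => c₃ w - Complex.I * E₃ w) := rfl
  have hφ₁ := hasDerivAt_sub_I_mul hΩ hc₁ hE₁
  have hφ₂ := hasDerivAt_sub_I_mul hΩ hc₂ hE₂
  have hφ₃ := hasDerivAt_sub_I_mul hΩ hc₃ hE₃
  have hImE : ∀ s ∈ I, (E₁ s).im = 0 ∧ (E₂ s).im = 0 ∧ (E₃ s).im = 0 := by
    intro s hs
    have him_primitive := fun {E e : ℂ → ℂ} (hE : ∀ z ∈ Ω, HasDerivAt E (e z) z)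
        (he : ∀ s ∈ I, (e s).im = 0) =>
      im_eq_of_hasDerivAt_of_im_eq_zero hI hIint (fun t ht => hE t (hIΩ t ht)) he hs hs₀
    simp only [him_primitive hE₁ fun t ht => (hereal t ht).1,
      him_primitive hE₂ fun t ht => (hereal t ht).2.1,
      him_primitive hE₃ fun t ht => (hereal t ht).2.2, hE₀, zero_im, and_self]
  have hImdc : ∀ s ∈ I, (deriv c₁ s).im = 0 ∧ (deriv c₂ s).im = 0 ∧ (deriv c₃ s).im = 0 := by
    intro s hs
    have him_deriv := fun {c : ℂ → ℂ} (hc : DifferentiableOn ℂ c Ω)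
        (hr : ∀ s ∈ I, (c s).im = 0) =>
      im_deriv_eq_zero_of_eventually_im_eq_zero (hc.differentiableAt (hΩ.mem_nhds (hIΩ s hs)))
        (eventually_of_mem (hI.mem_nhds hs) hr)
    exact ⟨him_deriv hc₁ fun t ht => (hcreal t ht).1,
      him_deriv hc₂ fun t ht => (hcreal t ht).2.1, him_deriv hc₃ fun t ht => (hcreal t ht).2.2⟩
  have hiso := sq_add_sq_deriv_sub_I_mul_eq_zero hΩ hΩconn.isPreconnected hI hs₀ (hIΩ s₀ hs₀)
    hc₁ hc₂ he₁ he₂ hBj₁ hBj₂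
  refine ⟨fun s hs => ?_, fun s hs => ?_, hiso, fun z hz _ => ?_⟩
  · simp [hx, reMap, hImE s hs]
  · rw [hx, dv_reMap (hφ₁ _ (hIΩ s hs)).differentiableAt (hφ₂ _ (hIΩ s hs)).differentiableAt
      (hφ₃ _ (hIΩ s hs)).differentiableAt, reMap, (hφ₁ _ (hIΩ s hs)).deriv,
      (hφ₂ _ (hIΩ s hs)).deriv, (hφ₃ _ (hIΩ s hs)).deriv]
    simp [mul_sub, hImdc s hs]
  · rw [hx]
    refine meanH_reMap_eq_zero (analyticAt_sub_I_mul hΩ hc₁ hE₁ hz)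
      (analyticAt_sub_I_mul hΩ hc₂ hE₂ hz) (analyticAt_sub_I_mul hΩ hc₃ hE₃ hz) ?_
    rw [(hφ₁ _ hz).deriv, (hφ₂ _ hz).deriv]
    exact hiso z hz

/-- Björling representation. Let Ω ⊆ ℂ be a connected, simply connected open set
containing a nonempty open real interval I, s₀ ∈ I, and let c = (c₁,c₂,c₃) and
e = (e₁,e₂,e₃) be componentwise holomorphic on Ω, real on I, satisfying the isotropic
Björling conditions ⟨c',c'⟩ = ⟨e,e⟩ and ⟨c',e⟩ = 0 along I. Then the map
x(z) = Re[c(z) − i∫_{s₀}^z e(w)dw] satisfies: (i) x = c on I; (ii) x_v = e on I;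
(iii) the holomorphic curve φ = c' − ie satisfies φ₁² + φ₂² = 0 on all of Ω, so x has
vanishing isotropic mean curvature at every point of Ω where the third component of
x_u × x_v is nonzero. -/
theorem stmt19 (Ω : Set ℂ) (hΩ : IsOpen Ω) (hΩconn : IsConnected Ω)
    (hΩsc : SimplyConnectedSpace ↥Ω)
    (I : Set ℝ) (hI : IsOpen I) (hIne : I.Nonempty) (hIint : I.OrdConnected)
    (hIΩ : ∀ s ∈ I, (s : ℂ) ∈ Ω) (s₀ : ℝ) (hs₀ : s₀ ∈ I)
    (c₁ c₂ c₃ e₁ e₂ e₃ : ℂ → ℂ)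
    (hc₁ : DifferentiableOn ℂ c₁ Ω) (hc₂ : DifferentiableOn ℂ c₂ Ω)
    (hc₃ : DifferentiableOn ℂ c₃ Ω)
    (he₁ : DifferentiableOn ℂ e₁ Ω) (he₂ : DifferentiableOn ℂ e₂ Ω)
    (he₃ : DifferentiableOn ℂ e₃ Ω)
    (hcreal : ∀ s ∈ I, (c₁ s).im = 0 ∧ (c₂ s).im = 0 ∧ (c₃ s).im = 0)
    (hereal : ∀ s ∈ I, (e₁ s).im = 0 ∧ (e₂ s).im = 0 ∧ (e₃ s).im = 0)
    (hBj₁ : ∀ s ∈ I, (deriv c₁ s) ^ 2 + (deriv c₂ s) ^ 2 = (e₁ s) ^ 2 + (e₂ s) ^ 2)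
    (hBj₂ : ∀ s ∈ I, deriv c₁ s * e₁ s + deriv c₂ s * e₂ s = 0)
    (E₁ E₂ E₃ : ℂ → ℂ)
    (hE₁ : ∀ z ∈ Ω, HasDerivAt E₁ (e₁ z) z)
    (hE₂ : ∀ z ∈ Ω, HasDerivAt E₂ (e₂ z) z)
    (hE₃ : ∀ z ∈ Ω, HasDerivAt E₃ (e₃ z) z)
    (hE₀ : E₁ s₀ = 0 ∧ E₂ s₀ = 0 ∧ E₃ s₀ = 0) :
    (∀ s ∈ I, bjorling c₁ c₂ c₃ E₁ E₂ E₃ s = ((c₁ s).re, (c₂ s).re, (c₃ s).re)) ∧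
    (∀ s ∈ I, dv (bjorling c₁ c₂ c₃ E₁ E₂ E₃) s = ((e₁ s).re, (e₂ s).re, (e₃ s).re)) ∧
    (∀ z ∈ Ω, (deriv c₁ z - Complex.I * e₁ z) ^ 2 +
        (deriv c₂ z - Complex.I * e₂ z) ^ 2 = 0) ∧
    (∀ z ∈ Ω,
      (cross3 (du (bjorling c₁ c₂ c₃ E₁ E₂ E₃) z)
          (dv (bjorling c₁ c₂ c₃ E₁ E₂ E₃) z)).2.2 ≠ 0 →
        meanH (bjorling c₁ c₂ c₃ E₁ E₂ E₃) z = 0) :=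
  stmt19_general Ω hΩ hΩconn I hI hIint hIΩ s₀ hs₀ c₁ c₂ c₃ e₁ e₂ e₃ hc₁ hc₂ hc₃ he₁ he₂ hcreal
    hereal hBj₁ hBj₂ E₁ E₂ E₃ hE₁ hE₂ hE₃ hE₀
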